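/- First sufficient condition for mean convergence: if ∏_{k=0}^{N₀−1} max( 1 − μ λmin(C[k]), μ λmax(C[k]) − 1 ) < 1, then ρ(Φ(k,k)) < 1 for every k ∈ {0,…,N₀−1} (so the mean-error recursion is asymptotically periodic for every initial condition). -/

import Mathlib

open Matrix Filter
open scoped ComplexOrder

noncomputable section

/-- Spectral radius of a complex matrix: the maximum modulus of its eigenvalues. -/
def specRad {n : Type*} [Fintype n] [DecidableEq n] (A : Matrix n n ℂ) : ℝ :=
  sSup ((fun z : ℂ => ‖z‖) '' spectrum ℂ A)

/-- The largest real eigenvalue of a complex matrix. -/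
def lamMax {n : Type*} [Fintype n] [DecidableEq n] (A : Matrix n n ℂ) : ℝ :=
  sSup {t : ℝ | (t : ℂ) ∈ spectrum ℂ A}

/-- The smallest real eigenvalue of a complex matrix. -/
def lamMin {n : Type*} [Fintype n] [DecidableEq n] (A : Matrix n n ℂ) : ℝ :=
  sInf {t : ℝ | (t : ℂ) ∈ spectrum ℂ A}

/-- Product of matrices `A (a + len - 1) * ⋯ * A (a + 1) * A a`
(factors with decreasing index from left to right; empty product is `1`). -/
def prodDesc {M : ℕ} (A : ℕ → Matrix (Fin M) (Fin M) ℂ) (a : ℕ) :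
    ℕ → Matrix (Fin M) (Fin M) ℂ
  | 0 => 1
  | (len + 1) => A (a + len) * prodDesc A a len

/-!
The spectral radius is bounded by the L2 operator norm, which is submultiplicative, so
`ρ(Φ(k,k)) ≤ ∏ ‖I - μ C[j]‖` over one period. Each `I - μ C[j]` is Hermitian with eigenvalues
`1 - μ t`, `t ∈ [λmin(C[j]), λmax(C[j])]`, so its norm is at most
`max (1 - μ λmin(C[j])) (μ λmax(C[j]) - 1)`. Starting the period at `k` only permutes the factors
cyclically, so the bound is the product in the hypothesis.
-/

open scoped Matrix.Norms.L2Operator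

section CStarAlgebra

variable {A : Type*} [CStarAlgebra A]

theorem CStarRing.norm_one_le : ‖(1 : A)‖ ≤ 1 := by
  cases subsingleton_or_nontrivial A
  · simp [Subsingleton.elim (1 : A) 0]
  · exact CStarRing.norm_one.le

theorem norm_le_norm_of_mem_spectrum {a : A} {z : ℂ} (hz : z ∈ spectrum ℂ a) : ‖z‖ ≤ ‖a‖ :=
  (spectrum.norm_le_norm_mul_of_mem hz).trans
    (mul_le_of_le_one_right (norm_nonneg a) CStarRing.norm_one_le)

theorem IsSelfAdjoint.norm_le_of_forall_mem_spectrum {a : A} (ha : IsSelfAdjoint a) {r : ℝ}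
    (hr : 0 ≤ r) (h : ∀ z ∈ spectrum ℂ a, ‖z‖ ≤ r) : ‖a‖ ≤ r := by
  lift r to NNReal using hr
  rw [← coe_nnnorm, NNReal.coe_le_coe, ← ENNReal.coe_le_coe, ← ha.spectralRadius_eq_nnnorm]
  exact iSup₂_le fun z hz => ENNReal.coe_le_coe.2 (h z hz)

end CStarAlgebra

open scoped Pointwise in
theorem spectrum_one_sub_smul {𝕜 A : Type*} [Field 𝕜] [Ring A] [Algebra 𝕜 A] (a : A) {c : 𝕜}
    (hc : c ≠ 0) : spectrum 𝕜 (1 - c • a) = (fun z => 1 - c * z) '' spectrum 𝕜 a := by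
  have hsmul := spectrum.unit_smul_eq_smul a (Units.mk0 c hc)
  rw [Units.smul_def, Units.smul_def, Units.val_mk0] at hsmul
  rw [← map_one (algebraMap 𝕜 A), ← spectrum.singleton_sub_eq, hsmul, Set.singleton_sub,
    ← Set.image_smul, Set.image_image]
  rfl

open Fin.NatCast in
theorem Finset.prod_range_add_mod {β : Type*} [CommMonoid β] (f : ℕ → β) (k : ℕ) :
    ∀ N, ∏ j ∈ range N, f ((k + j) % N) = ∏ j ∈ range N, f j
  | 0 => rfl
  | N + 1 => by
    simp only [← Fin.prod_univ_eq_prod_range]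
    refine Fintype.prod_equiv (Equiv.addLeft (k : Fin (N + 1))) _ _ fun i => ?_
    rw [Equiv.coe_addLeft, Fin.val_add, Fin.val_natCast, Nat.add_mod k i, Nat.mod_eq_of_lt i.isLt]

section Matrix

variable {n : Type*} [Fintype n] [DecidableEq n]

theorem specRad_le_norm (A : Matrix n n ℂ) : specRad A ≤ ‖A‖ :=
  Real.sSup_le (by rintro _ ⟨z, hz, rfl⟩; exact norm_le_norm_of_mem_spectrum hz) (norm_nonneg A)

theorem abs_le_norm_of_ofReal_mem_spectrum {A : Matrix n n ℂ} {t : ℝ}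
    (ht : (t : ℂ) ∈ spectrum ℂ A) : |t| ≤ ‖A‖ := by
  simpa using norm_le_norm_of_mem_spectrum ht

theorem lamMin_le_of_mem_spectrum {A : Matrix n n ℂ} {t : ℝ} (ht : (t : ℂ) ∈ spectrum ℂ A) :
    lamMin A ≤ t :=
  csInf_le ⟨-‖A‖, fun _ hs => neg_le_of_abs_le (abs_le_norm_of_ofReal_mem_spectrum hs)⟩ ht

theorem le_lamMax_of_mem_spectrum {A : Matrix n n ℂ} {t : ℝ} (ht : (t : ℂ) ∈ spectrum ℂ A) :
    t ≤ lamMax A :=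
  le_csSup ⟨‖A‖, fun _ hs => le_of_abs_le (abs_le_norm_of_ofReal_mem_spectrum hs)⟩ ht

theorem lamMin_le_lamMax (A : Matrix n n ℂ) : lamMin A ≤ lamMax A := by
  rcases {t : ℝ | (t : ℂ) ∈ spectrum ℂ A}.eq_empty_or_nonempty with h | ⟨t, ht⟩
  · simp [lamMin, lamMax, h]
  · exact (lamMin_le_of_mem_spectrum ht).trans (le_lamMax_of_mem_spectrum ht)

theorem Matrix.IsHermitian.norm_one_sub_smul_le {C : Matrix n n ℂ} (hC : C.IsHermitian)
    {μ : ℝ} (hμ : 0 < μ) :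
    ‖1 - (μ : ℂ) • C‖ ≤ max (1 - μ * lamMin C) (μ * lamMax C - 1) := by
  have hself : IsSelfAdjoint (1 - (μ : ℂ) • C) :=
    (IsSelfAdjoint.one _).sub
      ((show IsSelfAdjoint (μ : ℂ) from Complex.conj_ofReal μ).smul hC.isSelfAdjoint)
  have hmax_left := le_max_left (1 - μ * lamMin C) (μ * lamMax C - 1)
  have hmax_right := le_max_right (1 - μ * lamMin C) (μ * lamMax C - 1)
  have hnonneg : 0 ≤ max (1 - μ * lamMin C) (μ * lamMax C - 1) := by
    linarith [mul_le_mul_of_nonneg_left (lamMin_le_lamMax C) hμ.le]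
  refine hself.norm_le_of_forall_mem_spectrum hnonneg fun z hz => ?_
  rw [spectrum_one_sub_smul C (Complex.ofReal_ne_zero.2 hμ.ne')] at hz
  obtain ⟨w, hw, rfl⟩ := hz
  obtain ⟨t, rfl⟩ : ∃ t : ℝ, w = t := ⟨w.re, hC.isSelfAdjoint.mem_spectrum_eq_re hw⟩
  have hmin := mul_le_mul_of_nonneg_left (lamMin_le_of_mem_spectrum hw) hμ.le
  have hmax := mul_le_mul_of_nonneg_left (le_lamMax_of_mem_spectrum hw) hμ.le
  beta_reduce
  rw [show 1 - (μ : ℂ) * t = ((1 - μ * t : ℝ) : ℂ) by push_cast; rfl, Complex.norm_real,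
    Real.norm_eq_abs, abs_le]
  constructor <;> linarith

end Matrix

theorem norm_prodDesc_le {M : ℕ} (A : ℕ → Matrix (Fin M) (Fin M) ℂ) (a : ℕ) (f : ℕ → ℝ)
    (len : ℕ) (hf : ∀ j < len, ‖A (a + j)‖ ≤ f j) :
    ‖prodDesc A a len‖ ≤ ∏ j ∈ Finset.range len, f j := by
  induction len with
  | zero => simpa [prodDesc] using CStarRing.norm_one_le
  | succ l ih =>
    rw [Finset.prod_range_succ, mul_comm]
    calc ‖prodDesc A a (l + 1)‖ ≤ ‖A (a + l)‖ * ‖prodDesc A a l‖ := norm_mul_le _ _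
      _ ≤ f l * ∏ j ∈ Finset.range l, f j :=
        mul_le_mul (hf l l.lt_succ_self) (ih fun j hj => hf j (by omega)) (norm_nonneg _)
          ((norm_nonneg _).trans (hf l l.lt_succ_self))

theorem lms_mean_convergence_sufficient_first_general
    {M N₀ : ℕ} (μ : ℝ) (hμ : 0 < μ)
    (C : ℕ → Matrix (Fin M) (Fin M) ℂ)
    (hC : ∀ k < N₀, (C k).PosSemidef)
    (hcond : ∏ k ∈ Finset.range N₀,
        max (1 - μ * lamMin (C k)) (μ * lamMax (C k) - 1) < 1) :
    ∀ k < N₀,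
      specRad (prodDesc (fun l => (1 : Matrix (Fin M) (Fin M) ℂ) - (μ : ℂ) • C (l % N₀)) k N₀)
        < 1 := by
  intro k _
  set m : ℕ → ℝ := fun l => max (1 - μ * lamMin (C l)) (μ * lamMax (C l) - 1)
  calc _ ≤ ‖prodDesc (fun l => (1 : Matrix (Fin M) (Fin M) ℂ) - (μ : ℂ) • C (l % N₀)) k N₀‖ :=
        specRad_le_norm _
    _ ≤ ∏ j ∈ Finset.range N₀, m ((k + j) % N₀) :=
        norm_prodDesc_le _ k _ N₀ fun j hj =>
          (hC _ (Nat.mod_lt _ (by omega))).isHermitian.norm_one_sub_smul_le hμ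
    _ = ∏ j ∈ Finset.range N₀, m j := Finset.prod_range_add_mod m k N₀
    _ < 1 := hcond

/-- **First sufficient condition for mean convergence**: if
`∏_{k=0}^{N₀−1} max(1 − μ λmin(C[k]), μ λmax(C[k]) − 1) < 1` then `ρ(Φ(k,k)) < 1`
for every `k ∈ {0,…,N₀−1}`. -/
theorem lms_mean_convergence_sufficient_first
    {M N₀ : ℕ} (hM : 1 ≤ M) (hN : 1 ≤ N₀) (μ : ℝ) (hμ : 0 < μ)
    (C : ℕ → Matrix (Fin M) (Fin M) ℂ) (g : ℕ → Fin M → ℂ)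
    (hC : ∀ k < N₀, (C k).PosSemidef)
    (hcond : ∏ k ∈ Finset.range N₀,
        max (1 - μ * lamMin (C k)) (μ * lamMax (C k) - 1) < 1) :
    ∀ k < N₀,
      specRad (prodDesc (fun l => (1 : Matrix (Fin M) (Fin M) ℂ) - (μ : ℂ) • C (l % N₀)) k N₀)
        < 1 :=
  lms_mean_convergence_sufficient_first_general μ hμ C hC hcond
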